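/- Let f : A ⟶ B be a chain map of cochain complexes over an additive category, and suppose (π_A, σ_A, h_A) and (π_B, σ_B, h_B) are data of deformation retracts from A onto A' and from B onto B', respectively. Then there is a deformation retract from the mapping cone Cone(f) onto the mapping cone Cone(π_B ∘ f ∘ σ_A). -/
import Mathlib

open CategoryTheory CategoryTheory.Limits CochainComplex CochainComplex.HomComplex

structure DeformationRetract {C : Type*} [Category C] [Preadditive C]
    (M N : CochainComplex C ℤ) where
  π : M ⟶ N
  σ : N ⟶ M
  H : Cochain M M (-1)
  retract : σ ≫ π = 𝟙 N
  homotopy : δ (-1) 0 H = Cochain.ofHom (𝟙 M) - Cochain.ofHom (π ≫ σ)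
  H_π : H.comp (Cochain.ofHom π) (add_zero (-1)) = 0
  σ_H : (Cochain.ofHom σ).comp H (zero_add (-1)) = 0

namespace DeformationRetract

variable {C : Type*} [Category C] [Preadditive C]
variable {M N : CochainComplex C ℤ} (r : DeformationRetract M N)

lemma homotopy' : δ (-1) 0 r.H =
    Cochain.ofHom (𝟙 M) - (Cochain.ofHom r.π).comp (Cochain.ofHom r.σ) (zero_add 0) := by
  rw [r.homotopy, Cochain.ofHom_comp]

lemma retract' : (Cochain.ofHom r.σ).comp (Cochain.ofHom r.π) (zero_add 0) =
    Cochain.ofHom (𝟙 N) := by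
  rw [← Cochain.ofHom_comp, r.retract]

@[simp] lemma retract_assoc {K : CochainComplex C ℤ} {n : ℤ} (γ : Cochain N K n) :
    (Cochain.ofHom r.σ).comp ((Cochain.ofHom r.π).comp γ (zero_add n)) (zero_add n) = γ := by
  rw [← Cochain.comp_assoc_of_first_is_zero_cochain, r.retract', Cochain.id_comp]

@[simp] lemma H_π_assoc {K : CochainComplex C ℤ} {n m : ℤ} (γ : Cochain N K n)
    (h : -1 + n = m) :
    r.H.comp ((Cochain.ofHom r.π).comp γ (zero_add n)) h = 0 := by
  rw [← Cochain.comp_assoc_of_second_is_zero_cochain, r.H_π, Cochain.zero_comp]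

@[simp] lemma σ_H_assoc {K : CochainComplex C ℤ} {n m : ℤ} (γ : Cochain M K n)
    (h : -1 + n = m) :
    (Cochain.ofHom r.σ).comp (r.H.comp γ h) (zero_add m) = 0 := by
  rw [← Cochain.comp_assoc_of_first_is_zero_cochain, r.σ_H, Cochain.zero_comp]

lemma δ_HH : δ (-2) (-1) (r.H.comp r.H (by norm_num)) = 0 := by
  rw [δ_comp r.H r.H (by norm_num) 0 0 (-1) (by norm_num) (by norm_num) (by norm_num),
    r.homotopy']
  simp only [Cochain.comp_sub, Cochain.sub_comp, Cochain.comp_id, Cochain.id_comp,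
    Int.negOnePow_neg, Int.negOnePow_one, Units.neg_smul, one_smul]
  rw [← Cochain.comp_assoc_of_second_is_zero_cochain r.H (Cochain.ofHom r.π)
    (Cochain.ofHom r.σ) (by norm_num), r.H_π,
    Cochain.comp_assoc_of_first_is_zero_cochain, r.σ_H]
  simp

end DeformationRetract

namespace MDRaux

open CochainComplex.mappingCone

variable {C : Type*} [Category C] [Preadditive C] [HasBinaryBiproducts C]
  {A A' B B' : CochainComplex C ℤ} (f : A ⟶ B)
  (rA : DeformationRetract A A') (rB : DeformationRetract B B')

/-- the `A`-component of the projection `Π : Cone(f) ⟶ Cone(g)` -/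
noncomputable def aP : Cochain A (mappingCone (rA.σ ≫ f ≫ rB.π)) (-1) :=
  (Cochain.ofHom rA.π).comp (inl (rA.σ ≫ f ≫ rB.π)) (zero_add (-1)) +
    (rA.H.comp ((Cochain.ofHom f).comp (Cochain.ofHom rB.π) (zero_add 0))
      (add_zero (-1))).comp (Cochain.ofHom (inr (rA.σ ≫ f ≫ rB.π))) (add_zero (-1))

lemma δ_aP : δ (-1) 0 (aP f rA rB) =
    Cochain.ofHom (f ≫ rB.π ≫ inr (rA.σ ≫ f ≫ rB.π)) := by
  dsimp only [aP]
  rw [δ_add, δ_ofHom_comp, δ_inl, δ_comp_ofHom, δ_comp_zero_cochain _ _ _ (by norm_num),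
    rA.homotopy']
  simp only [δ_ofHom_comp, δ_ofHom, Cochain.comp_zero, zero_add,
    Cochain.ofHom_comp, Cochain.sub_comp, Cochain.add_comp, Cochain.id_comp,
    Cochain.comp_assoc_of_first_is_zero_cochain, Cochain.comp_assoc_of_second_is_zero_cochain,
    Cochain.comp_assoc_of_third_is_zero_cochain]
  abel

/-- the projection `Π : Cone(f) ⟶ Cone(g)` -/
noncomputable def P : mappingCone f ⟶ mappingCone (rA.σ ≫ f ≫ rB.π) :=
  desc f (aP f rA rB) (rB.π ≫ inr (rA.σ ≫ f ≫ rB.π)) (δ_aP f rA rB)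

/-- the `A'`-component of the inclusion `Σ : Cone(g) ⟶ Cone(f)` -/
noncomputable def aS : Cochain A' (mappingCone f) (-1) :=
  (Cochain.ofHom rA.σ).comp (inl f) (zero_add (-1)) -
    ((Cochain.ofHom rA.σ).comp ((Cochain.ofHom f).comp rB.H (zero_add (-1)))
      (zero_add (-1))).comp (Cochain.ofHom (inr f)) (add_zero (-1))

lemma δ_aS : δ (-1) 0 (aS f rA rB) =
    Cochain.ofHom ((rA.σ ≫ f ≫ rB.π) ≫ rB.σ ≫ inr f) := by
  dsimp only [aS]
  rw [δ_sub, δ_ofHom_comp, δ_inl, δ_comp_ofHom, δ_ofHom_comp, δ_ofHom_comp, rB.homotopy']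
  simp only [Cochain.ofHom_comp, Cochain.comp_sub, Cochain.sub_comp, Cochain.comp_id,
    Cochain.comp_assoc_of_first_is_zero_cochain, Cochain.comp_assoc_of_second_is_zero_cochain,
    Cochain.comp_assoc_of_third_is_zero_cochain]
  abel

/-- the inclusion `Σ : Cone(g) ⟶ Cone(f)` -/
noncomputable def S : mappingCone (rA.σ ≫ f ≫ rB.π) ⟶ mappingCone f :=
  desc (rA.σ ≫ f ≫ rB.π) (aS f rA rB) (rB.σ ≫ inr f) (δ_aS f rA rB)

@[simp] lemma inl_P :
    (inl f).comp (Cochain.ofHom (P f rA rB)) (add_zero (-1)) = aP f rA rB :=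
  inl_desc _ _ _ _

@[simp] lemma inrc_P :
    (Cochain.ofHom (inr f)).comp (Cochain.ofHom (P f rA rB)) (zero_add 0) =
      Cochain.ofHom (rB.π ≫ inr (rA.σ ≫ f ≫ rB.π)) := by
  rw [← Cochain.ofHom_comp]; dsimp only [P]; rw [inr_desc]

@[simp] lemma inl_S :
    (inl (rA.σ ≫ f ≫ rB.π)).comp (Cochain.ofHom (S f rA rB)) (add_zero (-1)) = aS f rA rB :=
  inl_desc _ _ _ _

@[simp] lemma inrc_S :
    (Cochain.ofHom (inr (rA.σ ≫ f ≫ rB.π))).comp (Cochain.ofHom (S f rA rB)) (zero_add 0) =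
      Cochain.ofHom (rB.σ ≫ inr f) := by
  rw [← Cochain.ofHom_comp]; dsimp only [S]; rw [inr_desc]

lemma SP : S f rA rB ≫ P f rA rB = 𝟙 _ := by
  apply Cochain.ofHom_injective
  rw [Cochain.ofHom_comp, ← mappingCone.id (rA.σ ≫ f ≫ rB.π)]
  simp only [S, P, ofHom_desc, descCochain, aS, aP, Cochain.ofHom_comp,
    Cochain.add_comp, Cochain.comp_add, Cochain.sub_comp, Cochain.comp_sub,
    Cochain.comp_assoc_of_first_is_zero_cochain, Cochain.comp_assoc_of_second_is_zero_cochain,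
    Cochain.comp_assoc_of_third_is_zero_cochain, inl_fst_assoc, inl_snd_assoc,
    inr_fst_assoc, inr_snd_assoc, Cochain.comp_zero, Cochain.zero_comp,
    DeformationRetract.retract_assoc, DeformationRetract.H_π_assoc,
    DeformationRetract.σ_H_assoc, Cochain.comp_id, Cochain.id_comp,
    add_zero, zero_add, sub_zero, zero_sub]

/-- the degree `-2` correction term of the homotopy on the cone -/
noncomputable def zc : Cochain A B (-2) :=
  rA.H.comp ((Cochain.ofHom f).comp rB.H (zero_add (-1))) (by norm_num) +
    (rA.H.comp rA.H (by norm_num)).comp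
      (Cochain.ofHom (f ≫ rB.π ≫ rB.σ)) (add_zero (-2)) +
    (Cochain.ofHom (rA.π ≫ rA.σ)).comp
      ((Cochain.ofHom f).comp (rB.H.comp rB.H (by norm_num)) (zero_add (-2))) (zero_add (-2))

/-- the `A`-component of the homotopy on the cone -/
noncomputable def aH : Cochain A (mappingCone f) (-2) :=
  -(rA.H.comp (inl f) (by norm_num)) +
    (zc f rA rB).comp (Cochain.ofHom (inr f)) (add_zero (-2))

/-- the `B`-component of the homotopy on the cone -/
noncomputable def bH : Cochain B (mappingCone f) (-1) :=
  rB.H.comp (Cochain.ofHom (inr f)) (add_zero (-1))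

/-- the homotopy on the cone -/
noncomputable def Hc : Cochain (mappingCone f) (mappingCone f) (-1) :=
  descCochain f (aH f rA rB) (bH f rB) (by norm_num)

lemma δ_zc : δ (-2) (-1) (zc f rA rB) =
    rA.H.comp (Cochain.ofHom f) (add_zero (-1)) -
      rA.H.comp (Cochain.ofHom (f ≫ rB.π ≫ rB.σ)) (add_zero (-1)) -
      (Cochain.ofHom f).comp rB.H (zero_add (-1)) +
      (Cochain.ofHom (rA.π ≫ rA.σ)).comp ((Cochain.ofHom f).comp rB.H (zero_add (-1)))
        (zero_add (-1)) := by
  dsimp only [zc]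
  rw [δ_add, δ_add, δ_comp_ofHom, rA.δ_HH, δ_ofHom_comp, δ_ofHom_comp, rB.δ_HH,
    δ_comp rA.H _ (by norm_num) 0 0 (-1) (by norm_num) (by norm_num) (by norm_num),
    δ_ofHom_comp, rA.homotopy', rB.homotopy']
  simp only [Cochain.zero_comp, Cochain.comp_zero, add_zero, zero_add,
    Int.negOnePow_neg, Int.negOnePow_one, Units.neg_smul, one_smul,
    Cochain.comp_sub, Cochain.sub_comp, Cochain.comp_id, Cochain.id_comp,
    Cochain.ofHom_comp,
    Cochain.comp_assoc_of_first_is_zero_cochain, Cochain.comp_assoc_of_second_is_zero_cochain,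
    Cochain.comp_assoc_of_third_is_zero_cochain]
  abel

lemma δ_Hc : δ (-1) 0 (Hc f rA rB) =
    Cochain.ofHom (𝟙 (mappingCone f)) - Cochain.ofHom (P f rA rB ≫ S f rA rB) := by
  dsimp only [Hc]
  rw [δ_descCochain f _ _ (by norm_num) 0 (by norm_num), Cochain.ofHom_comp,
    ← mappingCone.id f]
  dsimp only [aH, bH]
  rw [δ_add, δ_neg, δ_comp_ofHom, δ_comp_ofHom, δ_zc,
    δ_comp rA.H (inl f) (by norm_num) 0 0 (-1) (by norm_num) (by norm_num) (by norm_num),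
    δ_inl, rA.homotopy', rB.homotopy']
  simp only [P, ofHom_desc, descCochain, aS, aP, inl_S, inrc_S, Cochain.ofHom_comp,
    Int.negOnePow_neg, Int.negOnePow_one, Int.negOnePow_zero, Units.neg_smul, one_smul,
    Cochain.add_comp, Cochain.comp_add, Cochain.sub_comp, Cochain.comp_sub,
    Cochain.neg_comp, Cochain.comp_neg,
    Cochain.comp_assoc_of_first_is_zero_cochain, Cochain.comp_assoc_of_second_is_zero_cochain,
    Cochain.comp_assoc_of_third_is_zero_cochain, inl_fst_assoc, inl_snd_assoc,
    inr_fst_assoc, inr_snd_assoc, Cochain.comp_zero, Cochain.zero_comp,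
    DeformationRetract.retract_assoc, DeformationRetract.H_π_assoc,
    DeformationRetract.σ_H_assoc, Cochain.comp_id, Cochain.id_comp,
    add_zero, zero_add, sub_zero, zero_sub]
  abel

lemma Hc_P : (Hc f rA rB).comp (Cochain.ofHom (P f rA rB)) (add_zero (-1)) = 0 := by
  dsimp only [Hc, aH, bH, zc]
  simp only [descCochain, P, ofHom_desc, aP, Cochain.ofHom_comp,
    Cochain.add_comp, Cochain.comp_add, Cochain.sub_comp, Cochain.comp_sub,
    Cochain.neg_comp, Cochain.comp_neg,
    Cochain.comp_assoc_of_first_is_zero_cochain, Cochain.comp_assoc_of_second_is_zero_cochain,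
    Cochain.comp_assoc_of_third_is_zero_cochain, inl_fst_assoc, inl_snd_assoc,
    inr_fst_assoc, inr_snd_assoc, Cochain.comp_zero, Cochain.zero_comp,
    DeformationRetract.retract_assoc, DeformationRetract.H_π_assoc,
    DeformationRetract.σ_H_assoc, Cochain.comp_id, Cochain.id_comp,
    add_zero, zero_add, sub_zero, zero_sub, neg_add_cancel, add_neg_cancel]
  abel

lemma S_Hc : (Cochain.ofHom (S f rA rB)).comp (Hc f rA rB) (zero_add (-1)) = 0 := by
  rw [ext_cochain_from_iff (rA.σ ≫ f ≫ rB.π) (-2) (-1) (by norm_num)]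
  constructor
  · rw [← Cochain.comp_assoc_of_second_is_zero_cochain, inl_S]
    dsimp only [aS, Hc, aH, bH, zc]
    simp only [descCochain, Cochain.ofHom_comp,
      Cochain.add_comp, Cochain.comp_add, Cochain.sub_comp, Cochain.comp_sub,
      Cochain.neg_comp, Cochain.comp_neg, inl_descCochain, inr_descCochain,
      Cochain.comp_assoc_of_first_is_zero_cochain, Cochain.comp_assoc_of_second_is_zero_cochain,
      Cochain.comp_assoc_of_third_is_zero_cochain, inl_fst_assoc, inl_snd_assoc,
      inr_fst_assoc, inr_snd_assoc, Cochain.comp_zero, Cochain.zero_comp,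
      DeformationRetract.retract_assoc, DeformationRetract.H_π_assoc,
      DeformationRetract.σ_H_assoc, Cochain.comp_id, Cochain.id_comp,
      add_zero, zero_add, sub_zero, zero_sub, neg_add_cancel, add_neg_cancel, neg_zero]
  · rw [← Cochain.comp_assoc_of_first_is_zero_cochain, inrc_S]
    dsimp only [Hc, aH, bH, zc]
    simp only [descCochain, Cochain.ofHom_comp,
      Cochain.add_comp, Cochain.comp_add, Cochain.sub_comp, Cochain.comp_sub,
      Cochain.neg_comp, Cochain.comp_neg, inl_descCochain, inr_descCochain,
      Cochain.comp_assoc_of_first_is_zero_cochain, Cochain.comp_assoc_of_second_is_zero_cochain,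
      Cochain.comp_assoc_of_third_is_zero_cochain, inl_fst_assoc, inl_snd_assoc,
      inr_fst_assoc, inr_snd_assoc, Cochain.comp_zero, Cochain.zero_comp,
      DeformationRetract.retract_assoc, DeformationRetract.H_π_assoc,
      DeformationRetract.σ_H_assoc, Cochain.comp_id, Cochain.id_comp,
      add_zero, zero_add, sub_zero, zero_sub, neg_add_cancel, add_neg_cancel, neg_zero]

end MDRaux

theorem mappingCone_deformationRetract
    {C : Type*} [Category C] [Preadditive C] [HasBinaryBiproducts C]
    {A A' B B' : CochainComplex C ℤ} (f : A ⟶ B)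
    (rA : DeformationRetract A A') (rB : DeformationRetract B B') :
    Nonempty (DeformationRetract (mappingCone f) (mappingCone (rA.σ ≫ f ≫ rB.π))) := by
  exact ⟨{
    π := MDRaux.P f rA rB
    σ := MDRaux.S f rA rB
    H := MDRaux.Hc f rA rB
    retract := MDRaux.SP f rA rB
    homotopy := MDRaux.δ_Hc f rA rB
    H_π := MDRaux.Hc_P f rA rB
    σ_H := MDRaux.S_Hc f rA rB }⟩
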